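/- arXiv:2008.11924 — 3 statements merged into one kernel-verified Lean document; each statement's English description precedes it below -/
import Mathlib

section
/- Suppose each feasible solution s satisfies 2·f_β(s) ≤ f_α(s) ≤ M·f_β(s), where f_β(s) ∈ {0, 1, …, n} is an integer and M ≥ 2. If α, β > 0 satisfy β/α > n·(M - 2) + 2, then for any two feasible solutions s and t with f_β(s) = f_β(t) + 1, we have α·f_α(s) - β·f_β(s) < α·f_α(t) - β·f_β(t). -/
/-- Sufficient condition for one-step objective prioritization (Proposition 2). -/
theorem stmt1 {S : Type*} (fa fb : S → ℤ) (n : ℕ) (hn : 0 < n) (M : ℝ) (hM : 2 ≤ M)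
    (hfb : ∀ s : S, 0 ≤ fb s ∧ fb s ≤ (n : ℤ))
    (hfa : ∀ s : S, 2 * (fb s : ℝ) ≤ (fa s : ℝ) ∧ (fa s : ℝ) ≤ M * (fb s : ℝ))
    (α β : ℝ) (hα : 0 < α) (hβ : 0 < β)
    (hratio : (n : ℝ) * (M - 2) + 2 < β / α)
    (s t : S) (h : fb s = fb t + 1) :
    α * (fa s : ℝ) - β * (fb s : ℝ) < α * (fa t : ℝ) - β * (fb t : ℝ) := by
  have h1 := (hfa s).2
  have h2 := (hfa t).1
  have h3 : fb t ≤ (n : ℤ) - 1 := by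
    have := (hfb s).2
    omega
  have h3' : (fb t : ℝ) ≤ (n : ℝ) - 1 := by exact_mod_cast h3
  have hs : (fb s : ℝ) = (fb t : ℝ) + 1 := by exact_mod_cast congrArg Int.cast h
  have hβα : ((n : ℝ) * (M - 2) + 2) * α < β := by
    rw [div_eq_mul_inv] at hratio
    calc ((n : ℝ) * (M - 2) + 2) * α < β * α⁻¹ * α := by
          exact mul_lt_mul_of_pos_right hratio hα
      _ = β := by field_simp
  rw [hs] at h1 ⊢
  nlinarith [mul_le_mul_of_nonneg_left h3' (mul_nonneg hα.le (sub_nonneg.2 hM)),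
    mul_le_mul_of_nonneg_left h1 hα.le, mul_le_mul_of_nonneg_left h2 hα.le]
end

section
/- There exists an instance where the bound of the prioritization condition is necessary: for positive integers ℓ_a, ℓ_b, consider the two feasible solutions s (granting the single request, with f_α(s) = ℓ_a + ℓ_b, f_β(s) = 1) and t (granting nothing, f_α(t) = 0, f_β(t) = 0). Then for α, β > 0, the inequality α·f_α(s) - β·f_β(s) < α·f_α(t) - β·f_β(t) holds if and only if β/α > ℓ_a + ℓ_b. -/
/-- Tightness example (Proposition 3): the prioritization inequality between the
solution granting the single request (f_α = ℓ_a + ℓ_b, f_β = 1) and the empty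
solution (0, 0) holds iff β/α > ℓ_a + ℓ_b. -/
theorem stmt2 (la lb : ℤ) (hla : 0 < la) (hlb : 0 < lb)
    (α β : ℝ) (hα : 0 < α) (hβ : 0 < β) :
    (α * ((la : ℝ) + (lb : ℝ)) - β * 1 < α * 0 - β * 0) ↔ ((la : ℝ) + (lb : ℝ) < β / α) := by
  rw [lt_div_iff₀ hα]
  constructor <;> intro h <;> nlinarith
end

section
/- If there are functions bounding each feasible solution's link usage f_α(s) by m·f_β(s) ≤ f_α(s) ≤ M·f_β(s) with 0 < m ≤ M, and β/α > k·(M - m) + m for some integer k ≥ max f_β, then for feasible s, t with f_β(s) = f_β(t) + 1: α·f_α(s) - β·f_β(s) < α·f_α(t) - β·f_β(t). -/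
/-- Generalized prioritization condition with lower link bound m:
β/α > k(M - m) + m implies the one-step prioritization inequality. -/
theorem stmt12 {S : Type*} (fa : S → ℝ) (fb : S → ℤ) (k : ℕ)
    (m M : ℝ) (hm : 0 < m) (hmM : m ≤ M)
    (hfb : ∀ s : S, 0 ≤ fb s ∧ fb s ≤ (k : ℤ))
    (hfa : ∀ s : S, m * (fb s : ℝ) ≤ fa s ∧ fa s ≤ M * (fb s : ℝ))
    (α β : ℝ) (hα : 0 < α) (hβ : 0 < β)
    (hratio : (k : ℝ) * (M - m) + m < β / α)
    (s t : S) (h : fb s = fb t + 1) :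
    α * fa s - β * (fb s : ℝ) < α * fa t - β * (fb t : ℝ) := by
  have hβα : ((k : ℝ) * (M - m) + m) * α < β := (lt_div_iff₀ hα).mp hratio
  have h1 := (hfa s).2
  have h2 := (hfa t).1
  have hk : (fb s : ℝ) ≤ (k : ℝ) := by exact_mod_cast (hfb s).2
  have hcast : (fb s : ℝ) = (fb t : ℝ) + 1 := by exact_mod_cast congrArg (Int.cast : ℤ → ℝ) h
  have hMm : (M - m) * (fb s : ℝ) ≤ (M - m) * (k : ℝ) :=
    mul_le_mul_of_nonneg_left hk (sub_nonneg.mpr hmM)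
  have key : fa s - fa t ≤ (k : ℝ) * (M - m) + m := by nlinarith
  have key2 : α * (fa s - fa t) ≤ α * ((k : ℝ) * (M - m) + m) :=
    mul_le_mul_of_nonneg_left key hα.le
  nlinarith
end
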